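/- arXiv:2512.06057 — 10 statements merged into one kernel-verified Lean document; each statement's English description precedes it below -/
import Mathlib

section
/- Let n ≥ 2 be an integer and let c > 1 be a real number. If α is the unique positive real root of f(x) = x^n − x − c, then α < n·c / (n·c^(1−1/n) − 1). -/
/-- Strict Bernoulli: `(1+s)^n > 1 + n s` for `s > 0`, `n ≥ 2`. -/
lemma bern_strict (n : ℕ) (hn : 2 ≤ n) {s : ℝ} (hs : 0 < s) :
    1 + (n : ℝ) * s < (1 + s) ^ n := by
  have h := one_add_mul_self_lt_rpow_one_add (by linarith : (-1:ℝ) ≤ s) (ne_of_gt hs)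
    (by exact_mod_cast Nat.one_lt_cast.mpr (by omega) : (1:ℝ) < n)
  rwa [Real.rpow_natCast] at h

/-- For `f(x) = x^n - x - c` with integer `n ≥ 2` and real `c > 1`,
the unique positive real root `α` satisfies `α < n·c / (n·c^(1-1/n) - 1)`. -/
theorem root_upper_bound (n : ℕ) (hn : 2 ≤ n) (c : ℝ) (hc : 1 < c) (α : ℝ)
    (hα_pos : 0 < α) (hα_root : α ^ n - α - c = 0)
    (hα_unique : ∀ β : ℝ, 0 < β → β ^ n - β - c = 0 → β = α) :
    α < n * c / (n * c ^ (1 - (1 : ℝ) / n) - 1) := by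
  have hc0 : (0:ℝ) < c := by linarith
  have hn0 : (0:ℝ) < n := by positivity
  have hnR : (1:ℝ) ≤ (n:ℝ) := by exact_mod_cast (by omega : 1 ≤ n)
  set t : ℝ := c ^ ((1:ℝ)/n) with ht_def
  have ht1 : 1 < t := Real.one_lt_rpow_iff_of_pos hc0 |>.mpr (Or.inl ⟨hc, by positivity⟩)
  have ht0 : 0 < t := by linarith
  have htn : t ^ n = c := by
    rw [ht_def, ← Real.rpow_natCast (c ^ ((1:ℝ)/n)) n, ← Real.rpow_mul hc0.le]
    rw [one_div_mul_cancel (ne_of_gt hn0), Real.rpow_one]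
  have hexp : c ^ (1 - (1:ℝ)/n) = t ^ (n - 1) := by
    rw [ht_def, ← Real.rpow_natCast (c ^ ((1:ℝ)/n)) (n-1), ← Real.rpow_mul hc0.le]
    congr 1
    have : ((n - 1 : ℕ) : ℝ) = (n:ℝ) - 1 := by
      push_cast [Nat.cast_sub (by omega : 1 ≤ n)]; ring
    rw [this]
    field_simp
  have htn1 : 1 ≤ t ^ (n - 1) := one_le_pow₀ ht1.le
  have hn2 : (2:ℝ) ≤ (n:ℝ) := by exact_mod_cast hn
  have hD : 0 < (n:ℝ) * t ^ (n - 1) - 1 := by nlinarith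
  have hsplit : t ^ n = t ^ (n - 1) * t := by
    rw [← pow_succ]; congr 1; omega
  set D : ℝ := (n:ℝ) * t ^ (n - 1) - 1 with hD_def
  set B : ℝ := (n:ℝ) * c / D with hB_def
  have hBD : B * D = (n:ℝ) * c := by
    rw [hB_def, div_mul_cancel₀ _ hD.ne']
  have hBt : t < B := by
    have : B - t = t / D := by
      field_simp
      nlinarith [hBD]
    nlinarith [div_pos ht0 hD]
  have hB1 : 1 < B := lt_trans ht1 hBt
  -- key: B^n > B + c
  have hkey : c + B < B ^ n := by
    have hs : 0 < B / t - 1 := by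
      rw [sub_pos, lt_div_iff₀ ht0]; linarith
    have h := bern_strict n hn hs
    have h2 : (1 + (B/t - 1)) ^ n = B ^ n / t ^ n := by
      rw [show 1 + (B/t - 1) = B / t by ring, div_pow]
    rw [h2] at h
    have h3 : (1 + (n:ℝ) * (B/t - 1)) * t ^ n < B ^ n := by
      rw [← lt_div_iff₀ (by positivity : (0:ℝ) < t ^ n)]; exact h
    have h4 : (1 + (n:ℝ) * (B/t - 1)) * t ^ n = c + B := by
      have : (1 + (n:ℝ) * (B/t - 1)) * t ^ n
          = t ^ n + (n:ℝ) * t^(n-1) * B - (n:ℝ) * t ^ n := by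
        rw [hsplit]; field_simp; ring
      rw [this, htn]
      have : (n:ℝ) * t^(n-1) * B = B * D + B := by rw [hD_def]; ring
      rw [this, hBD]; ring
    linarith
  -- α > 1
  have hα1 : 1 < α := by
    by_contra h
    push_neg at h
    have : α ^ n ≤ α := by
      calc α ^ n ≤ α ^ 1 := pow_le_pow_of_le_one hα_pos.le h (by omega)
      _ = α := pow_one α
    linarith
  -- conclude
  rw [hexp]
  by_contra h
  push_neg at h
  have hBα : B ≤ α := h
  rcases eq_or_lt_of_le hBα with heq | hlt
  · rw [heq] at hkey; linarith
  · -- α^n ≥ B^n + n B^{n-1} (α - B) ≥ B^n + (α - B)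
    have hB0 : (0:ℝ) < B := by linarith
    have hs2 : (-2:ℝ) ≤ α / B - 1 := by
      have : 0 < α / B := by positivity
      linarith
    have h := one_add_mul_le_pow hs2 n
    have h2 : (1 + (α/B - 1)) ^ n = α ^ n / B ^ n := by
      rw [show 1 + (α/B - 1) = α / B by ring, div_pow]
    rw [h2] at h
    have h3 : (1 + (n:ℝ) * (α/B - 1)) * B ^ n ≤ α ^ n := by
      rw [← le_div_iff₀ (by positivity : (0:ℝ) < B ^ n)]; exact h
    have hBsplit : B ^ n = B ^ (n - 1) * B := by
      rw [← pow_succ]; congr 1; omega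
    have h4 : (1 + (n:ℝ) * (α/B - 1)) * B ^ n
        = B ^ n + (n:ℝ) * B ^ (n-1) * (α - B) := by
      rw [hBsplit]; field_simp
    have hBn1 : 1 ≤ (n:ℝ) * B ^ (n-1) := by
      have : 1 ≤ B ^ (n-1) := one_le_pow₀ hB1.le
      nlinarith
    have h5 : α - B ≤ (n:ℝ) * B ^ (n-1) * (α - B) := by
      have := mul_le_mul_of_nonneg_right hBn1 (le_of_lt (sub_pos.mpr hlt))
      linarith [this, one_mul (α - B)]
    have : α ^ n ≥ B ^ n + (α - B) := by
      rw [h4] at h3; linarith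
    linarith
end

section
/- If (x, n, B, k) is a prefix polymorphism, then x = ⌊(B^k · n)^(1/n)⌋ + 1. -/
/-- A quadruple `(x, n, B, k)` of positive integers with `B ≥ 2` is a *prefix
polymorphism* if `x^n = B^k·n + x` and `B^(k-1) ≤ x < B^k` (i.e. `x` has exactly
`k` digits in base `B`). -/
def IsPrefixPolymorphism (x n B k : ℕ) : Prop :=
  0 < x ∧ 0 < n ∧ 2 ≤ B ∧ 0 < k ∧
    x ^ n = B ^ k * n + x ∧ B ^ (k - 1) ≤ x ∧ x < B ^ k

/-! The equation `x ^ n = B ^ k * n + x` forces `n ≥ 2`, and then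
`x ^ n - (x - 1) ^ n ≥ x ^ (n - 1) ≥ x`, so `B ^ k * n = x ^ n - x` lies in `[(x - 1) ^ n, x ^ n)`.
Taking real `n`-th roots, `(B ^ k * n) ^ (1 / n) ∈ [x - 1, x)`. -/

theorem Nat.sub_one_pow_succ_add_pow_le {x : ℕ} (hx : 1 ≤ x) (m : ℕ) :
    (x - 1) ^ (m + 1) + x ^ m ≤ x ^ (m + 1) := by
  obtain ⟨y, rfl⟩ : ∃ y, x = y + 1 := ⟨x - 1, by omega⟩
  rw [Nat.add_sub_cancel]
  calc y ^ (m + 1) + (y + 1) ^ m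
      = y * y ^ m + (y + 1) ^ m := by ring
    _ ≤ y * (y + 1) ^ m + (y + 1) ^ m := by gcongr; omega
    _ = (y + 1) ^ (m + 1) := by ring

theorem Nat.sub_one_pow_add_le_pow {x n : ℕ} (hx : 1 ≤ x) (hn : 2 ≤ n) :
    (x - 1) ^ n + x ≤ x ^ n := by
  obtain ⟨m, rfl⟩ : ∃ m, n = m + 1 := ⟨n - 1, by omega⟩
  have : x ≤ x ^ m := Nat.le_self_pow (by omega) x
  have := Nat.sub_one_pow_succ_add_pow_le hx m
  omega

theorem Int.floor_rpow_one_div_eq_of_pow_le_of_lt_pow {z : ℝ} {a n : ℕ} (hn : n ≠ 0)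
    (hz : 0 ≤ z) (hlo : (a : ℝ) ^ n ≤ z) (hhi : z < ((a : ℝ) + 1) ^ n) :
    ⌊z ^ ((1 : ℝ) / n)⌋ = a := by
  have hy : 0 ≤ z ^ ((1 : ℝ) / n) := Real.rpow_nonneg hz _
  have hyn : (z ^ ((1 : ℝ) / n)) ^ n = z := by
    rw [one_div]
    exact Real.rpow_inv_natCast_pow hz hn
  rw [Int.floor_eq_iff]
  push_cast
  constructor
  · exact le_of_pow_le_pow_left₀ hn hy (by rwa [hyn])
  · exact lt_of_pow_lt_pow_left₀ n (by positivity) (by rwa [hyn])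

namespace IsPrefixPolymorphism

variable {x n B k : ℕ}

theorem two_le_exponent (h : IsPrefixPolymorphism x n B k) : 2 ≤ n := by
  obtain ⟨_, hn, hB, -, heq, -⟩ := h
  have : 0 < B ^ k := pow_pos (by omega) k
  by_contra hn2
  obtain rfl : n = 1 := by omega
  rw [pow_one, mul_one] at heq
  omega

theorem sub_one_pow_le (h : IsPrefixPolymorphism x n B k) :
    (x - 1) ^ n ≤ B ^ k * n := by
  have := Nat.sub_one_pow_add_le_pow h.1 h.two_le_exponent
  obtain ⟨-, -, -, -, heq, -⟩ := h
  omega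

theorem lt_pow (h : IsPrefixPolymorphism x n B k) : B ^ k * n < x ^ n := by
  obtain ⟨hx, -, -, -, heq, -⟩ := h
  omega

end IsPrefixPolymorphism

/-- If `(x, n, B, k)` is a prefix polymorphism, then `x = ⌊(B^k·n)^(1/n)⌋ + 1`. -/
theorem prefix_polymorphism_floor_formula (x n B k : ℕ)
    (h : IsPrefixPolymorphism x n B k) :
    (x : ℤ) = ⌊(((B : ℝ) ^ k * n) ^ ((1 : ℝ) / n))⌋ + 1 := by
  have hx : x - 1 + 1 = x := Nat.sub_add_cancel h.1
  have hlo : (((x - 1 : ℕ) : ℝ)) ^ n ≤ (B : ℝ) ^ k * n := by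
    exact_mod_cast h.sub_one_pow_le
  have hhi : (B : ℝ) ^ k * n < (((x - 1 : ℕ) : ℝ) + 1) ^ n := by
    rw [← Nat.cast_add_one, hx]
    exact_mod_cast h.lt_pow
  rw [Int.floor_rpow_one_div_eq_of_pow_le_of_lt_pow h.2.1.ne'
    (by positivity) hlo hhi]
  omega
end

section
/- If (x, n, B, k) is a prefix polymorphism and j is the number of digits of n in base B (i.e., B^(j−1) ≤ n < B^j), then (k − 1)·(n − 1) ≤ j. -/
/-!
Since `x` has `k` digits, `x^n` is at least `B^((k-1)n)`; on the other hand
`x^n = B^k n + x < B^k (n + 1) ≤ B^(k+j)`. Comparing exponents gives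
`(k-1)n < k + j`, which rearranges to `(k-1)(n-1) ≤ j`.
-/

namespace IsPrefixPolymorphism

variable {x n B k : ℕ}

theorem pow_lt_base_pow_mul_succ (h : IsPrefixPolymorphism x n B k) :
    x ^ n < B ^ k * (n + 1) := by
  obtain ⟨-, -, -, -, heq, -, hlt⟩ := h
  rw [heq, mul_add_one]
  exact Nat.add_lt_add_left hlt _

theorem base_pow_le_pow (h : IsPrefixPolymorphism x n B k) : B ^ ((k - 1) * n) ≤ x ^ n := by
  obtain ⟨-, -, -, -, -, hle, -⟩ := h
  rw [pow_mul]
  exact Nat.pow_le_pow_left hle n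

theorem mul_lt_add_of_lt_base_pow (h : IsPrefixPolymorphism x n B k) {j : ℕ}
    (hj : n < B ^ j) : (k - 1) * n < k + j := by
  have hB : 1 < B := h.2.2.1
  refine (Nat.pow_lt_pow_iff_right hB).mp ?_
  calc B ^ ((k - 1) * n) ≤ x ^ n := h.base_pow_le_pow
    _ < B ^ k * (n + 1) := h.pow_lt_base_pow_mul_succ
    _ ≤ B ^ k * B ^ j := Nat.mul_le_mul_left _ hj
    _ = B ^ (k + j) := (pow_add B k j).symm

end IsPrefixPolymorphism

theorem prefix_polymorphism_knj_inequality_general (x n B k j : ℕ)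
    (h : IsPrefixPolymorphism x n B k)
    (hj_upper : n < B ^ j) :
    (k - 1) * (n - 1) ≤ j := by
  have hexp := h.mul_lt_add_of_lt_base_pow hj_upper
  rw [Nat.mul_sub_one]
  omega

/-- If `(x, n, B, k)` is a prefix polymorphism and `j` is the number of digits
of `n` in base `B`, then `(k-1)·(n-1) ≤ j`. -/
theorem prefix_polymorphism_knj_inequality (x n B k j : ℕ)
    (h : IsPrefixPolymorphism x n B k)
    (hj_pos : 0 < j) (hj_lower : B ^ (j - 1) ≤ n) (hj_upper : n < B ^ j) :
    (k - 1) * (n - 1) ≤ j :=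
  prefix_polymorphism_knj_inequality_general x n B k j h hj_upper
end

section
/- If (x, n, B, k) is a prefix polymorphism, then k = 1 or k = 2; in particular, there are no prefix polymorphisms with k ≥ 3. -/
/-- If `(x, n, B, k)` is a prefix polymorphism, then `k = 1` or `k = 2`;
in particular, there are no prefix polymorphisms with `k ≥ 3`. -/
theorem prefix_polymorphism_k_le_two (x n B k : ℕ)
    (h : IsPrefixPolymorphism x n B k) :
    (k = 1 ∨ k = 2) ∧ ¬(3 ≤ k) := by
  obtain ⟨hx, hn, hB, hk, heq, hlo, hhi⟩ := h
  have hBkpos : 0 < B ^ k := Nat.pow_pos (by omega)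
  have hk3 : ¬ (3 ≤ k) := by
    intro hk3
    -- first, n ≥ 2
    have hn2 : 2 ≤ n := by
      by_contra hc
      have hn1 : n = 1 := by omega
      subst hn1
      simp at heq
      omega
    have hupper : x ^ n < B ^ k * (n + 1) := by
      calc x ^ n = B ^ k * n + x := heq
        _ < B ^ k * n + B ^ k := by omega
        _ = B ^ k * (n + 1) := by ring
    have hlower : B ^ ((k - 1) * n) ≤ x ^ n := by
      rw [pow_mul]
      exact Nat.pow_le_pow_left hlo n
    rcases Nat.lt_or_ge n 3 with h2 | h3
    · -- n = 2
      have hn2' : n = 2 := by omega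
      subst hn2'
      have h1 : B ^ k * B ^ (k - 2) ≤ x ^ 2 := by
        have he : k + (k - 2) = (k - 1) * 2 := by omega
        calc B ^ k * B ^ (k - 2) = B ^ (k + (k - 2)) := (pow_add B k (k - 2)).symm
          _ = B ^ ((k - 1) * 2) := by rw [he]
          _ ≤ x ^ 2 := hlower
      have h2' : x ^ 2 < B ^ k * 3 := by
        calc x ^ 2 < B ^ k * (2 + 1) := hupper
          _ = B ^ k * 3 := by ring
      have hBk2 : B ^ (k - 2) < 3 :=
        Nat.lt_of_mul_lt_mul_left (lt_of_le_of_lt h1 h2')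
      have hB2 : B = 2 := by
        have hle : B ≤ B ^ (k - 2) := by
          calc B = B ^ 1 := (pow_one B).symm
            _ ≤ B ^ (k - 2) := Nat.pow_le_pow_right (by omega) (by omega)
        omega
      subst hB2
      have hk3' : k = 3 := by
        by_contra hc
        have : 2 ^ 2 ≤ 2 ^ (k - 2) := Nat.pow_le_pow_right (by omega) (by omega)
        omega
      subst hk3'
      norm_num at heq hlo hhi
      interval_cases x <;> omega
    · -- n ≥ 3
      have hexp : k + (2 * n - 3) ≤ (k - 1) * n := by
        obtain ⟨a, rfl⟩ : ∃ a, k = a + 3 := ⟨k - 3, by omega⟩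
        have hs : (a + 3 - 1) * n = a * n + 2 * n := by
          have : a + 3 - 1 = a + 2 := by omega
          rw [this]; ring
        rw [hs]
        have han : a ≤ a * n := Nat.le_mul_of_pos_right a (by omega)
        have h23 : 2 * n - 3 + 3 = 2 * n := by omega
        omega
      have hchain : B ^ k * B ^ (2 * n - 3) < B ^ k * (n + 1) := by
        calc B ^ k * B ^ (2 * n - 3) = B ^ (k + (2 * n - 3)) := (pow_add _ _ _).symm
          _ ≤ B ^ ((k - 1) * n) := Nat.pow_le_pow_right (by omega) hexp
          _ ≤ x ^ n := hlower
          _ < B ^ k * (n + 1) := hupper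
      have hsmall : B ^ (2 * n - 3) < n + 1 :=
        Nat.lt_of_mul_lt_mul_left hchain
      have hbig : n + 1 ≤ B ^ (2 * n - 3) := by
        calc n + 1 ≤ 2 ^ n := Nat.lt_two_pow_self (n := n)
          _ ≤ 2 ^ (2 * n - 3) := Nat.pow_le_pow_right (by omega) (by omega)
          _ ≤ B ^ (2 * n - 3) := Nat.pow_le_pow_left hB _
      omega
  exact ⟨by omega, hk3⟩
end

section
/- If (x, n, B, k) is a prefix polymorphism with n ≥ 3, then k = 1. -/
theorem lt_two_pow_sub_two {n : ℕ} (hn : 5 ≤ n) : n < 2 ^ (n - 2) := by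
  induction n, hn using Nat.le_induction with
  | base => norm_num
  | succ m hm ih =>
    rw [show m + 1 - 2 = m - 2 + 1 by omega, pow_succ]
    omega

namespace IsPrefixPolymorphism

variable {x n B k : ℕ}

theorem base_pow_pred_le (h : IsPrefixPolymorphism x n B k) : B ^ (k - 1) ≤ x :=
  h.2.2.2.2.2.1

theorem base_le (h : IsPrefixPolymorphism x n B k) (hk : 2 ≤ k) : B ≤ x :=
  (Nat.le_self_pow (by omega) B).trans h.base_pow_pred_le

theorem base_pow_le_sq (h : IsPrefixPolymorphism x n B k) (hk : 2 ≤ k) : B ^ k ≤ x ^ 2 :=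
  calc B ^ k = B * B ^ (k - 1) := by rw [← pow_succ']; congr 1; omega
    _ ≤ x * x := Nat.mul_le_mul (h.base_le hk) h.base_pow_pred_le
    _ = x ^ 2 := (sq x).symm

theorem pow_sub_two_le (h : IsPrefixPolymorphism x n B k) (hk : 2 ≤ k) : x ^ (n - 2) ≤ n := by
  have ⟨_, _, hB, _, heq, _, _⟩ := h
  have hx : 2 ≤ x := hB.trans (h.base_le hk)
  have hsplit : x ^ n = x ^ (n - 2) * x ^ 2 := by
    rw [← pow_add]; congr 1; have := h.two_le_exponent; omega
  have hlt : x ^ (n - 2) * x ^ 2 < (n + 1) * x ^ 2 :=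
    calc x ^ (n - 2) * x ^ 2 = B ^ k * n + x := hsplit ▸ heq
      _ ≤ x ^ 2 * n + x := Nat.add_le_add_right (Nat.mul_le_mul_right n (h.base_pow_le_sq hk)) x
      _ < (n + 1) * x ^ 2 := by nlinarith
  exact Nat.lt_succ_iff.mp (Nat.lt_of_mul_lt_mul_right hlt)

end IsPrefixPolymorphism

/-- If `(x, n, B, k)` is a prefix polymorphism with `n ≥ 3`, then `k = 1`. -/
theorem prefix_polymorphism_n_ge_three_k_eq_one (x n B k : ℕ)
    (h : IsPrefixPolymorphism x n B k) (hn : 3 ≤ n) :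
    k = 1 := by
  have ⟨_, _, hB, hk0, heq, hlo, _⟩ := h
  by_contra hk1
  have hk : 2 ≤ k := by omega
  have hBx := h.base_le hk
  have hxn := h.pow_sub_two_le hk
  have hx2 : 2 ≤ x := hB.trans hBx
  have hn4 : n ≤ 4 := by
    by_contra! hn5
    have := calc n < 2 ^ (n - 2) := lt_two_pow_sub_two hn5
      _ ≤ x ^ (n - 2) := Nat.pow_le_pow_left hx2 _
      _ ≤ n := hxn
    omega
  have hx4 : x ≤ 4 := (Nat.le_self_pow (by omega) x).trans (hxn.trans hn4)
  have hk3 : k ≤ 3 := by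
    have : 2 ^ (k - 1) ≤ 2 ^ 2 := (Nat.pow_le_pow_left hB _).trans (hlo.trans hx4)
    have := (Nat.pow_le_pow_iff_right (by norm_num)).mp this
    omega
  interval_cases n <;> interval_cases x <;> interval_cases B <;> interval_cases k <;> omega
end

section
/- Every prefix polymorphism (x, n, B, k) satisfies exactly one of the following: (k = 1 and n = 2), (k = 2 and n = 2), or (k = 1 and n ≥ 3). -/
lemma aux_two_pow : ∀ m : ℕ, 3 ≤ m → m + 2 < 2 ^ m := by
  intro m hm
  induction m with
  | zero => omega
  | succ p ih =>
    rcases Nat.lt_or_ge p 3 with h1 | h1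
    · interval_cases p <;> first | omega | norm_num
    · have := ih h1
      have : 2 ^ (p + 1) = 2 ^ p + 2 ^ p := by ring
      omega

/-- Every prefix polymorphism `(x, n, B, k)` satisfies exactly one of:
`k = 1 ∧ n = 2` (triangular class), `k = 2 ∧ n = 2` (Pell class), or
`k = 1 ∧ 3 ≤ n` (Fermat class). -/
theorem prefix_polymorphism_classification (x n B k : ℕ)
    (h : IsPrefixPolymorphism x n B k) :
    ((k = 1 ∧ n = 2) ∨ (k = 2 ∧ n = 2) ∨ (k = 1 ∧ 3 ≤ n)) ∧
      ¬((k = 1 ∧ n = 2) ∧ (k = 2 ∧ n = 2)) ∧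
      ¬((k = 1 ∧ n = 2) ∧ (k = 1 ∧ 3 ≤ n)) ∧
      ¬((k = 2 ∧ n = 2) ∧ (k = 1 ∧ 3 ≤ n)) := by
  obtain ⟨hx, hn, hB, hk, heq, hlo, hhi⟩ := h
  have hBk : 0 < B ^ k := Nat.pow_pos (by omega)
  -- n ≥ 2
  have hn2 : 2 ≤ n := by
    by_contra hc
    have : n = 1 := by omega
    subst this
    simp at heq
    omega
  -- key inequality
  have key : B ^ ((k - 1) * n) < B ^ k * (n + 1) := by
    calc B ^ ((k - 1) * n) = (B ^ (k - 1)) ^ n := by rw [pow_mul]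
      _ ≤ x ^ n := Nat.pow_le_pow_left hlo n
      _ = B ^ k * n + x := heq
      _ < B ^ k * n + B ^ k := by omega
      _ = B ^ k * (n + 1) := by ring
  have cancel : ∀ e : ℕ, k + e ≤ (k - 1) * n → B ^ e < n + 1 := by
    intro e he
    have h1 : B ^ k * B ^ e ≤ B ^ ((k - 1) * n) := by
      rw [← pow_add]; exact Nat.pow_le_pow_right (by omega) he
    exact Nat.lt_of_mul_lt_mul_left (lt_of_le_of_lt h1 key)
  -- k ≤ 2
  have hk2 : k ≤ 2 := by
    by_contra hc
    push_neg at hc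
    have hkn : 3 ≤ k := hc
    -- first show n = 2
    have hne2 : n = 2 := by
      by_contra hc2
      have hn3 : 3 ≤ n := by omega
      have he : k + (2 * n - 3) ≤ (k - 1) * n := by
        obtain ⟨a, rfl⟩ : ∃ a, k = a + 3 := ⟨k - 3, by omega⟩
        obtain ⟨b, rfl⟩ : ∃ b, n = b + 3 := ⟨n - 3, by omega⟩
        have : (a + 3 - 1) * (b + 3) = a * b + 3 * a + 2 * b + 6 := by
          simp [Nat.add_sub_cancel]; ring
        omega
      have hlt := cancel _ he
      have h2le : 2 ^ (2 * n - 3) ≤ B ^ (2 * n - 3) := Nat.pow_le_pow_left hB _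
      have hbig : n < 2 ^ n := Nat.lt_two_pow_self
      have : 2 ^ n ≤ 2 ^ (2 * n - 3) := Nat.pow_le_pow_right (by omega) (by omega)
      omega
    subst hne2
    have he : k + (k - 2) ≤ (k - 1) * 2 := by omega
    have hlt := cancel _ he
    have h2le : 2 ^ (k - 2) ≤ B ^ (k - 2) := Nat.pow_le_pow_left hB _
    -- B^(k-2) < 3 so B = 2 and k = 3
    have hk3 : k = 3 := by
      by_contra hc3
      have : 4 ≤ k := by omega
      have : 2 ^ 2 ≤ 2 ^ (k - 2) := Nat.pow_le_pow_right (by norm_num) (by omega)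
      norm_num at this
      omega
    subst hk3
    have hB2 : B = 2 := by
      simp at hlt
      omega
    subst hB2
    norm_num at heq hlo hhi
    interval_cases x <;> norm_num at heq
  -- if k = 2 then n = 2
  have hk2n : k = 2 → n = 2 := by
    intro hke
    subst hke
    by_contra hc
    have hn3 : 3 ≤ n := by omega
    have he : 2 + (n - 2) ≤ (2 - 1) * n := by omega
    have hlt := cancel _ he
    have h2le : 2 ^ (n - 2) ≤ B ^ (n - 2) := Nat.pow_le_pow_left hB _
    have hn4 : n ≤ 4 := by
      by_contra hc2
      have h5 : 5 ≤ n := by omega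
      have := aux_two_pow (n - 2) (by omega)
      omega
    interval_cases n
    · -- n = 3 : B ^ 1 < 4
      norm_num at hlt
      interval_cases B
      · norm_num at heq hlo hhi
        interval_cases x <;> norm_num at heq
      · norm_num at heq hlo hhi
        interval_cases x <;> norm_num at heq
    · -- n = 4 : B ^ 2 < 5
      have hBe : B = 2 := by
        by_contra hc2
        have h3 : 3 ≤ B := by omega
        have h9 : 3 ^ (4 - 2) ≤ B ^ (4 - 2) := Nat.pow_le_pow_left h3 _
        norm_num at h9 hlt
        omega
      subst hBe
      norm_num at heq hlo hhi
      interval_cases x <;> norm_num at heq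
  constructor
  · rcases Nat.lt_or_ge n 3 with h1 | h1
    · have : n = 2 := by omega
      interval_cases k <;> omega
    · have : k = 1 := by
        by_contra hc
        have : k = 2 := by omega
        have := hk2n this
        omega
      omega
  · omega
end

section
/- A quadruple (x, n, B, k) with n = 2 and k = 1 is a prefix polymorphism if and only if there exists an integer t ≥ 4 such that x = t and B = t·(t − 1)/2. In other words, the prefix polymorphisms with n = 2, k = 1 are exactly the quadruples (t, 2, t·(t−1)/2, 1) for integers t ≥ 4. -/
namespace Nat

theorem sq_eq_mul_pred_add_self (x : ℕ) : x ^ 2 = x * (x - 1) + x := by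
  cases x <;> simp [sq, Nat.mul_succ]

theorem sq_eq_mul_two_add_self_iff {x B : ℕ} : x ^ 2 = B * 2 + x ↔ B = x * (x - 1) / 2 := by
  rw [sq_eq_mul_pred_add_self, Nat.add_right_cancel_iff,
    Nat.eq_div_iff_mul_eq_left two_ne_zero (Nat.even_mul_pred_self x).two_dvd, eq_comm]

theorem lt_mul_pred_div_two_iff {x : ℕ} : x < x * (x - 1) / 2 ↔ 4 ≤ x := by
  constructor
  · intro h
    by_contra! hx
    interval_cases x <;> simp at h
  · intro hx
    have : x * 3 ≤ x * (x - 1) := Nat.mul_le_mul_left x (by omega)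
    omega

end Nat

/-- Triangular class: the prefix polymorphisms with `n = 2` and `k = 1` are
exactly the quadruples `(t, 2, t·(t-1)/2, 1)` for integers `t ≥ 4`. -/
theorem triangular_class (x B : ℕ) :
    IsPrefixPolymorphism x 2 B 1 ↔ ∃ t : ℕ, 4 ≤ t ∧ x = t ∧ B = t * (t - 1) / 2 := by
  simp only [IsPrefixPolymorphism, pow_one, Nat.sub_self, pow_zero, Nat.sq_eq_mul_two_add_self_iff]
  constructor
  · rintro ⟨-, -, -, -, rfl, -, hlt⟩
    exact ⟨x, Nat.lt_mul_pred_div_two_iff.mp hlt, rfl, rfl⟩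
  · rintro ⟨x, hx, rfl, rfl⟩
    have hlt := Nat.lt_mul_pred_div_two_iff.mpr hx
    exact ⟨by omega, two_pos, by omega, one_pos, rfl, by omega, hlt⟩
end

section
/- If (x, n, B, k) is a prefix polymorphism with n = 2 and k = 2, then 1 + 8·B² is a perfect square, say 1 + 8·B² = z² with z a positive integer, and x = (1 + z)/2; in particular z² − 8·B² = 1, so (z, B) is a solution of the Pell equation z² − 8·B² = 1. -/
theorem Nat.sq_two_mul_sub_one_of_sq_eq_add {x m : ℕ} (hx : 0 < x) (h : x ^ 2 = m + x) :
    (2 * x - 1) ^ 2 = 4 * m + 1 := by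
  obtain ⟨y, rfl⟩ : ∃ y, x = y + 1 := ⟨x - 1, by omega⟩
  rw [show 2 * (y + 1) - 1 = 2 * y + 1 by omega]
  linear_combination 4 * h

/-- Pell class, forward direction: if `(x, 2, B, 2)` is a prefix polymorphism,
then `1 + 8·B² = z²` for a positive integer `z`, `x = (1 + z)/2`, and
`(z, B)` solves the Pell equation `z² - 8·B² = 1`. -/
theorem pell_class_forward (x B : ℕ) (h : IsPrefixPolymorphism x 2 B 2) :
    ∃ z : ℕ, 0 < z ∧ 1 + 8 * B ^ 2 = z ^ 2 ∧ x = (1 + z) / 2 ∧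
      (z : ℤ) ^ 2 - 8 * (B : ℤ) ^ 2 = 1 := by
  obtain ⟨hx, -, -, -, heq, -, -⟩ := h
  have hz : 1 + 8 * B ^ 2 = (2 * x - 1) ^ 2 := by
    rw [Nat.sq_two_mul_sub_one_of_sq_eq_add hx heq]
    ring
  refine ⟨2 * x - 1, by omega, hz, by omega, ?_⟩
  zify [show 1 ≤ 2 * x by omega] at hz ⊢
  linarith
end

section
/- If z and B are positive integers with B ≥ 2 satisfying the Pell equation z² − 8·B² = 1, then z is odd and the quadruple ((1 + z)/2, 2, B, 2) is a prefix polymorphism. -/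
/-!
Writing `z = 2m + 1`, the Pell equation `z² = 8B² + 1` becomes `m(m + 1) = 2B²`, i.e.
`x² = 2B² + x` for `x = m + 1 = (1 + z)/2`. This is the polymorphism equation for
`n = k = 2`, and it pins `x` between `B` and `B²`: `x < B` would give `x² < 2B²`, while
`x ≥ B²` would give `B²(B² - 1) ≤ 2B²`, impossible for `B ≥ 2`.
-/

namespace Nat

theorem odd_of_sq_eq_two_mul_add_one {z k : ℕ} (h : z ^ 2 = 2 * k + 1) : Odd z :=
  (Nat.odd_pow_iff two_ne_zero).mp (h ▸ odd_two_mul_add_one k)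

theorem half_succ_sq_eq_of_sq_eq_eight_mul_sq_add_one {z B : ℕ} (h : z ^ 2 = 8 * B ^ 2 + 1) :
    ((1 + z) / 2) ^ 2 = 2 * B ^ 2 + (1 + z) / 2 := by
  obtain ⟨m, rfl⟩ : Odd z := odd_of_sq_eq_two_mul_add_one (k := 4 * B ^ 2) (by omega)
  have hx : (1 + (2 * m + 1)) / 2 = m + 1 := by omega
  rw [hx]
  nlinarith

section SqEqTwoMulSqAdd

variable {x B : ℕ}

theorem le_of_sq_eq_two_mul_sq_add (h : x ^ 2 = 2 * B ^ 2 + x) : B ≤ x := by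
  by_contra! hxB
  have : x ^ 2 < B ^ 2 := Nat.pow_lt_pow_left hxB two_ne_zero
  omega

theorem lt_sq_of_sq_eq_two_mul_sq_add (hB : 2 ≤ B) (h : x ^ 2 = 2 * B ^ 2 + x) : x < B ^ 2 := by
  by_contra! hx
  have hB2 : 4 ≤ B ^ 2 := by nlinarith
  have : B ^ 2 * x ≤ x ^ 2 := by rw [sq x]; exact Nat.mul_le_mul_right x hx
  nlinarith

theorem isPrefixPolymorphism_two_two_of_sq_eq (hB : 2 ≤ B) (h : x ^ 2 = 2 * B ^ 2 + x) :
    IsPrefixPolymorphism x 2 B 2 := by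
  have hBx := le_of_sq_eq_two_mul_sq_add h
  refine ⟨by omega, two_pos, hB, two_pos, by rw [h, mul_comm], by simpa using hBx,
    lt_sq_of_sq_eq_two_mul_sq_add hB h⟩

end SqEqTwoMulSqAdd

end Nat

theorem pell_class_backward_general (z B : ℕ) (hB : 2 ≤ B)
    (hpell : (z : ℤ) ^ 2 - 8 * (B : ℤ) ^ 2 = 1) :
    Odd z ∧ IsPrefixPolymorphism ((1 + z) / 2) 2 B 2 := by
  have hz : z ^ 2 = 8 * B ^ 2 + 1 := by zify; linarith
  exact ⟨Nat.odd_of_sq_eq_two_mul_add_one (k := 4 * B ^ 2) (by omega),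
    Nat.isPrefixPolymorphism_two_two_of_sq_eq hB
      (Nat.half_succ_sq_eq_of_sq_eq_eight_mul_sq_add_one hz)⟩

/-- Pell class, converse direction: if `z, B` are positive integers with
`B ≥ 2` and `z² - 8·B² = 1`, then `z` is odd and `((1+z)/2, 2, B, 2)` is a
prefix polymorphism. -/
theorem pell_class_backward (z B : ℕ) (hz : 0 < z) (hB : 2 ≤ B)
    (hpell : (z : ℤ) ^ 2 - 8 * (B : ℤ) ^ 2 = 1) :
    Odd z ∧ IsPrefixPolymorphism ((1 + z) / 2) 2 B 2 :=
  pell_class_backward_general z B hB hpell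
end

section
/- Let t ≥ 2 and n ≥ 3 be integers with t^n ≡ t (mod n) and (t, n) ≠ (2, 3). Then the quadruple (t, n, (t^n − t)/n, 1) is a prefix polymorphism. Moreover, (2, 3, 2, 1) is not a prefix polymorphism. -/
/-! With `B = (x^n - x)/n` the equation `x^n = B·n + x` holds as soon as `n ∣ x^n - x`, so
`(x, n, B, 1)` is a prefix polymorphism exactly when the single-digit condition `x < B` holds,
i.e. when `x·(n + 1) < x^n`. For `x ≥ 2`, `n ≥ 3` this fails only at `(x, n) = (2, 3)`. -/

lemma add_two_lt_two_pow {m : ℕ} (hm : 3 ≤ m) : m + 2 < 2 ^ m := by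
  induction m, hm using Nat.le_induction with
  | base => norm_num
  | succ m _ ih => rw [pow_succ]; omega

lemma mul_succ_lt_pow {t n : ℕ} (ht : 2 ≤ t) (hn : 3 ≤ n) (hne : ¬(t = 2 ∧ n = 3)) :
    t * (n + 1) < t ^ n := by
  obtain ⟨m, rfl⟩ : ∃ m, n = m + 1 := ⟨n - 1, by omega⟩
  suffices m + 2 < t ^ m by rw [pow_succ']; exact Nat.mul_lt_mul_of_pos_left this (by omega)
  rcases Nat.lt_or_ge m 3 with hm | hm
  · obtain rfl : m = 2 := by omega
    have ht3 : 3 ≤ t := by omega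
    nlinarith
  · calc m + 2 < 2 ^ m := add_two_lt_two_pow hm
      _ ≤ t ^ m := Nat.pow_le_pow_left ht m

lemma isPrefixPolymorphism_div_one {x n : ℕ} (hx : 0 < x) (hdvd : n ∣ x ^ n - x)
    (hlt : x * (n + 1) < x ^ n) : IsPrefixPolymorphism x n ((x ^ n - x) / n) 1 := by
  set B := (x ^ n - x) / n
  have hBn : B * n = x ^ n - x := Nat.div_mul_cancel hdvd
  have hn : 0 < n := Nat.pos_of_ne_zero (by rintro rfl; rw [zero_add, mul_one, pow_zero] at hlt; omega)
  rw [Nat.mul_succ] at hlt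
  have hxB : x < B := Nat.lt_of_mul_lt_mul_right (a := n) (by omega)
  refine ⟨hx, hn, by omega, one_pos, ?_, hx, by rwa [pow_one]⟩
  rw [pow_one, hBn]
  omega

/-- Fermat class, converse direction: if `t ≥ 2`, `n ≥ 3`, `t^n ≡ t (mod n)`
and `(t, n) ≠ (2, 3)`, then `(t, n, (t^n - t)/n, 1)` is a prefix polymorphism.
Moreover, `(2, 3, 2, 1)` is not a prefix polymorphism. -/
theorem fermat_class_backward :
    (∀ t n : ℕ, 2 ≤ t → 3 ≤ n → t ^ n ≡ t [MOD n] → ¬(t = 2 ∧ n = 3) →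
      IsPrefixPolymorphism t n ((t ^ n - t) / n) 1) ∧
    ¬ IsPrefixPolymorphism 2 3 2 1 := by
  refine ⟨fun t n ht hn hmod hne => ?_, by simp [IsPrefixPolymorphism]⟩
  have hdvd : n ∣ t ^ n - t := (Nat.modEq_iff_dvd' (Nat.le_self_pow (by omega) t)).mp hmod.symm
  exact isPrefixPolymorphism_div_one (by omega) hdvd (mul_succ_lt_pow ht hn hne)
end
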